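/- Let μ be an infinite cardinal and λ a cardinal, and identify μ with its initial ordinal. Let A be a set of functions ν : μ → λ. Assume that for every ordinal α < μ and every function η : α → λ, the set {ν(α) : ν ∈ A and ν↾α = η} is finite (where ν↾α is the restriction of ν to {β : β < α}). Then |A| ≤ 2^μ. -/

import Mathlib

/-!
Fix any linear order on the values. Code a branch `ν` by the function sending `α` to the rank
of `ν α` among the finitely many values taken at `α` by members of `A` that agree with `ν`
below `α`. By well-founded induction on `α`, two branches with the same code agree everywhere,
so `|A| ≤ ℵ₀ ^ μ = 2 ^ μ`.
-/

open Cardinal Set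

universe u v

section FinitelyBranching

variable {ι β : Type*}

def branchValues [LT ι] (A : Set (ι → β)) (α : ι) (η : ι → β) : Set β :=
  {x | ∃ ν ∈ A, (∀ γ < α, ν γ = η γ) ∧ ν α = x}

lemma branchValues_congr [LT ι] (A : Set (ι → β)) {α : ι} {η η' : ι → β}
    (h : ∀ γ < α, η γ = η' γ) : branchValues A α η = branchValues A α η' := by
  ext x
  refine exists_congr fun ν => and_congr_right fun _ => and_congr_left fun _ =>
    forall₂_congr fun γ hγ => by rw [h γ hγ]

lemma apply_mem_branchValues [LT ι] {A : Set (ι → β)} {ν : ι → β} (hν : ν ∈ A) (α : ι) :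
    ν α ∈ branchValues A α ν :=
  ⟨ν, hν, fun _ _ => rfl, rfl⟩

lemma strictMonoOn_ncard_inter_Iio [LinearOrder β] {S : Set β} (hS : S.Finite) :
    StrictMonoOn (fun x => (S ∩ Iio x).ncard) S := by
  intro x hx y _ hxy
  refine ncard_lt_ncard ⟨inter_subset_inter_right _ (Iio_subset_Iio hxy.le), fun h => ?_⟩
    (hS.inter_of_left _)
  exact (lt_irrefl x) (h ⟨hx, hxy⟩).2

noncomputable def branchRank [LT ι] [LinearOrder β] (A : Set (ι → β)) (ν : ι → β) (α : ι) : ℕ :=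
  (branchValues A α ν ∩ Iio (ν α)).ncard

lemma injOn_branchRank [LT ι] [WellFoundedLT ι] [LinearOrder β] {A : Set (ι → β)}
    (hfin : ∀ α η, (branchValues A α η).Finite) : InjOn (branchRank A) A := by
  intro ν hν ν' hν' h
  funext α
  induction α using WellFoundedLT.induction with
  | _ α ih =>
  have hvals : branchValues A α ν = branchValues A α ν' := branchValues_congr A ih
  have hrank := congrFun h α
  rw [branchRank, branchRank, hvals] at hrank
  exact (strictMonoOn_ncard_inter_Iio (hfin α ν')).injOn
    (hvals ▸ apply_mem_branchValues hν α) (apply_mem_branchValues hν' α) hrank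

end FinitelyBranching

lemma mk_le_aleph0_power_of_finite_branchValues {ι : Type u} {β : Type v} [LT ι] [WellFoundedLT ι]
    {A : Set (ι → β)} (hfin : ∀ α η, (branchValues A α η).Finite) :
    #A ≤ ℵ₀ ^ lift.{v} #ι := by
  classical
  let : LinearOrder β := linearOrderOfSTO WellOrderingRel
  have h := lift_mk_le_lift_mk_of_injective (injOn_branchRank hfin).injective
  rw [lift_id', mk_arrow] at h
  simpa [← lift_umax.{u, v}] using h

/-- Let `μ` be an infinite cardinal and `λ` a cardinal, with `μ` identified with its
initial ordinal. Let `A` be a set of functions `ν : μ → λ`. Assume that for every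
ordinal `α < μ` and every function `η : α → λ`, the set
`{ν(α) : ν ∈ A and ν↾α = η}` is finite. Then `|A| ≤ 2 ^ μ`. -/
theorem card_le_two_power_of_finitely_branching (μ lam : Cardinal) (hμ : ℵ₀ ≤ μ)
    (A : Set (μ.ord.ToType → lam.ord.ToType))
    (hfin : ∀ α : μ.ord.ToType, ∀ η : μ.ord.ToType → lam.ord.ToType,
      {x : lam.ord.ToType | ∃ ν ∈ A, (∀ β < α, ν β = η β) ∧ ν α = x}.Finite) :
    #A ≤ 2 ^ μ := by
  calc #A ≤ ℵ₀ ^ lift #μ.ord.ToType := mk_le_aleph0_power_of_finite_branchValues hfin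
    _ = 2 ^ μ := by
      rw [lift_id', mk_ord_toType, power_eq_two_power hμ (natCast_lt_aleph0 (n := 2)).le hμ]
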